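/- Let R be a commutative ring and equip the free algebra R⟨X₁,…,Xₙ⟩ with a weight ℕ-gradation determined by positive integer degrees deg Xᵢ = nᵢ, and let ≺ be an ℕ-graded monomial ordering on the standard monomial basis B with respect to this gradation. Let I be an ideal of R⟨X₁,…,Xₙ⟩ and J = ⟨LH(I)⟩ the ideal generated by the ℕ-leading homogeneous elements of I. Then the set of leading terms {LC(f)·LM(f) : f ∈ J, f ≠ 0} equals {LC(f)·LM(f) : f ∈ I, f ≠ 0}, and LM(J) = LM(I). -/

import Mathlib

noncomputable section
open MonoidAlgebra
open scoped Classical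

/-- Words in the alphabet `X_1, ..., X_n`: the standard monomial basis `B`. -/
abbrev Word (n : ℕ) : Type := FreeMonoid (Fin n)

/-- The free `R`-algebra `R⟨X_1, ..., X_n⟩`, realized as the monoid algebra of the
free monoid on `n` letters over `R`. -/
abbrev FreeAlg (R : Type) [CommRing R] (n : ℕ) : Type := MonoidAlgebra R (Word n)

variable {R : Type} [CommRing R] {n : ℕ}

/-- The monomial (word) `w` viewed as an element of the free algebra. -/
def mono (R : Type) [CommRing R] {n : ℕ} (w : Word n) : FreeAlg R n :=
  MonoidAlgebra.of R (Word n) w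

/-- A monomial ordering: a well-ordering on words compatible with two-sided multiplication. -/
def IsMonomialOrder (n : ℕ) [LinearOrder (Word n)] : Prop :=
  WellFoundedLT (Word n) ∧ ∀ w u v s : Word n, u < v → w * u * s < w * v * s

/-- The leading monomial of `f` (with junk value `1` for `f = 0`). -/
def LMon [LinearOrder (Word n)] (f : FreeAlg R n) : Word n :=
  if h : f = 0 then 1 else f.coeff.support.max'
    (Finsupp.support_nonempty_iff.mpr (fun hc => h (MonoidAlgebra.coeff_eq_zero.mp hc)))

/-- The leading coefficient of `f`. -/
def LCoef [LinearOrder (Word n)] (f : FreeAlg R n) : R := f.coeff (LMon f)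

/-- `f` is monic: it is nonzero and its leading coefficient is `1`. -/
def IsMonic [LinearOrder (Word n)] (f : FreeAlg R n) : Prop := f ≠ 0 ∧ LCoef f = 1

/-- `v` divides `u` as words: `u = w * v * s` for some words `w, s`. -/
def MDvd {n : ℕ} (v u : Word n) : Prop := ∃ w s : Word n, u = w * v * s

/-- `G` is a monic Gröbner basis of the two-sided ideal `I`: every element of `G` is monic,
and the leading monomial of every nonzero element of `I` is divisible by the leading
monomial of some element of `G`. -/
def IsMonicGB [LinearOrder (Word n)] (G : Set (FreeAlg R n))
    (I : TwoSidedIdeal (FreeAlg R n)) : Prop :=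
  (∀ g ∈ G, IsMonic g) ∧ ∀ f ∈ I, f ≠ 0 → ∃ g ∈ G, MDvd (LMon g) (LMon f)

/-- The weight degree of a word, for the weights `deg Xᵢ = d i`. -/
def wdeg {n : ℕ} (d : Fin n → ℕ) (w : Word n) : ℕ := ((FreeMonoid.toList w).map d).sum

/-- The maximal weight degree occurring in `f`. -/
def maxdeg (d : Fin n → ℕ) (f : FreeAlg R n) : ℕ := f.coeff.support.sup (wdeg d)

/-- The ℕ-leading homogeneous element `LH(f)` of `f`: the sum of the terms of `f` of
maximal weight degree. -/
def LH (d : Fin n → ℕ) (f : FreeAlg R n) : FreeAlg R n :=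
  ∑ w ∈ f.coeff.support.filter (fun w => wdeg d w = maxdeg d f), MonoidAlgebra.single w (f.coeff w)

/-- The set `LH(S)` of leading homogeneous elements of the nonzero elements of `S`. -/
def LHset (d : Fin n → ℕ) (S : Set (FreeAlg R n)) : Set (FreeAlg R n) :=
  {x | ∃ f ∈ S, f ≠ 0 ∧ x = LH d f}

/-- An ℕ-graded monomial ordering with respect to the weights `d`: a monomial ordering
such that words of smaller degree are smaller. -/
def IsGradedMonomialOrder {n : ℕ} (d : Fin n → ℕ) [LinearOrder (Word n)] : Prop :=
  IsMonomialOrder n ∧ ∀ u v : Word n, wdeg d u < wdeg d v → u < v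

/-- The leading term `LC(f)·LM(f)` of `f`, as an element of the free algebra. -/
def LTerm [LinearOrder (Word n)] (f : FreeAlg R n) : FreeAlg R n :=
  MonoidAlgebra.single (LMon f) (LCoef f)

/-- The set of leading terms `LC(f)·LM(f)` of the nonzero elements of `S`. -/
def LTset [LinearOrder (Word n)] (S : Set (FreeAlg R n)) : Set (FreeAlg R n) :=
  {x | ∃ f ∈ S, f ≠ 0 ∧ x = LTerm f}

/-- The set `LM(S)` of leading monomials of the nonzero elements of `S`. -/
def LMset [LinearOrder (Word n)] (S : Set (FreeAlg R n)) : Set (Word n) :=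
  {w | ∃ f ∈ S, f ≠ 0 ∧ LMon f = w}

/-!
For an ℕ-graded ordering the leading term of `f` is that of `LH(f)`, so it suffices to find, for
every nonzero `h ∈ J`, some `g ∈ I` with `LH(g) = LH(h)`. The elements `h` whose degree-`m`
component agrees with that of some `g ∈ I` of degree at most `m` form an additive subgroup. It
contains every `u · LH(f) · v` with `u, v` scalar multiples of words and `f ∈ I` (take
`g = u f v` if that product has degree `m`, and `g = 0` otherwise), hence all of `J`; now take
`m = deg h`.
-/

section WeightGrading

variable {d : Fin n → ℕ}

omit [CommRing R] in
lemma wdeg_mul (u v : Word n) : wdeg d (u * v) = wdeg d u + wdeg d v := by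
  simp [wdeg, FreeMonoid.toList_mul]

variable (d) in
def homogComp (m : ℕ) : FreeAlg R n →+ FreeAlg R n where
  toFun f := ofCoeff (f.coeff.filter fun w => wdeg d w = m)
  map_zero' := congrArg ofCoeff (Finsupp.filter_zero _)
  map_add' f g := by simp [Finsupp.filter_add]

lemma homogComp_coeff (m : ℕ) (f : FreeAlg R n) (w : Word n) :
    (homogComp d m f).coeff w = if wdeg d w = m then f.coeff w else 0 :=
  Finsupp.filter_apply _ _ _

lemma support_homogComp_subset (m : ℕ) (f : FreeAlg R n) :
    (homogComp d m f).coeff.support ⊆ f.coeff.support :=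
  fun w hw => by
    rw [Finsupp.mem_support_iff, homogComp_coeff] at hw
    split_ifs at hw
    · exact Finsupp.mem_support_iff.2 hw
    · exact absurd rfl hw

lemma homogComp_single (m : ℕ) (w : Word n) (r : R) :
    homogComp d m (single w r) = if wdeg d w = m then single w r else 0 := by
  ext v
  rw [homogComp_coeff]
  by_cases hwv : w = v
  · subst hwv; split_ifs <;> simp
  · split_ifs <;> simp [coeff_single, hwv]

lemma homogComp_homogComp (m k : ℕ) (f : FreeAlg R n) :
    homogComp d m (homogComp d k f) = if m = k then homogComp d k f else 0 := by
  ext w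
  by_cases hmk : m = k
  · subst hmk
    simp only [if_true, homogComp_coeff]
    split_ifs <;> rfl
  · simp only [hmk, if_false, homogComp_coeff, coeff_zero, Finsupp.zero_apply]
    split_ifs <;> first | omega | rfl

lemma homogComp_single_mul_mul_single (u v : Word n) (r s : R) (j : ℕ) (f : FreeAlg R n) :
    homogComp d (wdeg d u + j + wdeg d v) (single u r * f * single v s) =
      single u r * homogComp d j f * single v s := by
  induction f using MonoidAlgebra.induction_linear with
  | zero => simp
  | add f g hf hg => simp only [mul_add, add_mul, map_add, hf, hg]
  | single w c =>
    simp only [single_mul_single, homogComp_single, wdeg_mul]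
    split_ifs <;> first | omega | simp [single_mul_single]

lemma le_maxdeg_of_homogComp_ne_zero {m : ℕ} {f : FreeAlg R n} (h : homogComp d m f ≠ 0) :
    m ≤ maxdeg d f := by
  obtain ⟨w, hw⟩ := Finsupp.support_nonempty_iff.2 (coeff_eq_zero.not.2 h)
  have hdeg : wdeg d w = m := by
    by_contra hne
    exact Finsupp.mem_support_iff.1 hw (by rw [homogComp_coeff, if_neg hne])
  exact hdeg ▸ Finset.le_sup (support_homogComp_subset m f hw)

lemma maxdeg_add_le (f g : FreeAlg R n) :
    maxdeg d (f + g) ≤ max (maxdeg d f) (maxdeg d g) :=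
  (Finset.sup_mono Finsupp.support_add).trans_eq Finset.sup_union

lemma maxdeg_neg (f : FreeAlg R n) : maxdeg d (-f) = maxdeg d f := by
  simp [maxdeg]

lemma maxdeg_mul_le (f g : FreeAlg R n) : maxdeg d (f * g) ≤ maxdeg d f + maxdeg d g := by
  refine Finset.sup_le fun w hw => ?_
  obtain ⟨u, hu, v, hv, rfl⟩ := Finset.mem_mul.1 (support_coeff_mul_subset f g hw)
  rw [wdeg_mul]
  exact add_le_add (Finset.le_sup hu) (Finset.le_sup hv)

lemma maxdeg_single_le (w : Word n) (r : R) : maxdeg d (single w r) ≤ wdeg d w :=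
  Finset.sup_le fun v hv => by rw [Finset.mem_singleton.1 (Finsupp.support_single_subset hv)]

lemma LH_eq_homogComp (f : FreeAlg R n) : LH d f = homogComp d (maxdeg d f) f := by
  ext w
  rw [LH, coeff_sum, Finset.sum_apply', homogComp_coeff]
  simp only [coeff_single, Finsupp.single_apply, Finset.sum_ite_eq', Finset.mem_filter,
    Finsupp.mem_support_iff]
  by_cases hw : f.coeff w = 0 <;> simp [hw]

lemma LH_ne_zero {f : FreeAlg R n} (hf : f ≠ 0) : LH d f ≠ 0 := by
  obtain ⟨w, hw, hdeg⟩ := Finset.exists_mem_eq_sup f.coeff.support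
    (Finsupp.support_nonempty_iff.2 (coeff_eq_zero.not.2 hf)) (wdeg d)
  intro h
  have hcoeff := congrArg (coeff · w) h
  simp only [LH_eq_homogComp, homogComp_coeff, maxdeg, hdeg, if_true, coeff_zero] at hcoeff
  exact Finsupp.mem_support_iff.1 hw hcoeff

end WeightGrading

section Approximation

variable (d : Fin n → ℕ) (I : TwoSidedIdeal (FreeAlg R n))

def degreeApprox (m : ℕ) : AddSubgroup (FreeAlg R n) where
  carrier := {h | ∃ g ∈ I, maxdeg d g ≤ m ∧ homogComp d m g = homogComp d m h}
  zero_mem' := ⟨0, I.zero_mem, Nat.zero_le _, rfl⟩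
  add_mem' := by
    rintro _ _ ⟨g, hg, hg_le, hg_eq⟩ ⟨g', hg', hg'_le, hg'_eq⟩
    exact ⟨g + g', I.add_mem hg hg', (maxdeg_add_le g g').trans (max_le hg_le hg'_le),
      by rw [map_add, map_add, hg_eq, hg'_eq]⟩
  neg_mem' := by
    rintro _ ⟨g, hg, hg_le, hg_eq⟩
    exact ⟨-g, I.neg_mem hg, (maxdeg_neg g).trans_le hg_le, by rw [map_neg, map_neg, hg_eq]⟩

variable {d I}

lemma single_mul_LH_mul_single_mem_degreeApprox {f : FreeAlg R n} (hf : f ∈ I) (m : ℕ)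
    (u v : Word n) (r s : R) : single u r * LH d f * single v s ∈ degreeApprox d I m := by
  have hhomog : homogComp d (wdeg d u + maxdeg d f + wdeg d v) (single u r * LH d f * single v s) =
      single u r * LH d f * single v s := by
    rw [homogComp_single_mul_mul_single, LH_eq_homogComp, homogComp_homogComp, if_pos rfl]
  obtain rfl | hne := eq_or_ne (wdeg d u + maxdeg d f + wdeg d v) m
  · refine ⟨single u r * f * single v s, I.mul_mem_right _ _ (I.mul_mem_left _ _ hf), ?_, ?_⟩
    · calc maxdeg d (single u r * f * single v s)
          ≤ maxdeg d (single u r * f) + maxdeg d (single v s) := maxdeg_mul_le _ _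
        _ ≤ maxdeg d (single u r) + maxdeg d f + maxdeg d (single v s) := by
            gcongr; exact maxdeg_mul_le _ _
        _ ≤ wdeg d u + maxdeg d f + wdeg d v := by
            gcongr <;> exact maxdeg_single_le _ _
    · rw [homogComp_single_mul_mul_single, ← LH_eq_homogComp, hhomog]
  · refine ⟨0, I.zero_mem, Nat.zero_le _, ?_⟩
    rw [map_zero, ← hhomog, homogComp_homogComp, if_neg hne.symm]

lemma mul_LH_mul_mem_degreeApprox {f : FreeAlg R n} (hf : f ∈ I) (m : ℕ) (a b : FreeAlg R n) :
    a * LH d f * b ∈ degreeApprox d I m := by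
  induction a using MonoidAlgebra.induction_linear with
  | zero => simp [zero_mem]
  | add a a' ha ha' => simpa only [add_mul] using add_mem ha ha'
  | single u r =>
    induction b using MonoidAlgebra.induction_linear with
    | zero => simp [zero_mem]
    | add b b' hb hb' => simpa only [mul_add] using add_mem hb hb'
    | single v s => exact single_mul_LH_mul_single_mem_degreeApprox hf m u v r s

lemma span_LHset_le_degreeApprox (m : ℕ) :
    ((TwoSidedIdeal.span (LHset d (I : Set (FreeAlg R n))) : TwoSidedIdeal (FreeAlg R n)) :
      Set (FreeAlg R n)) ⊆ degreeApprox d I m := by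
  intro h hh
  rw [SetLike.mem_coe, TwoSidedIdeal.mem_span_iff_mem_addSubgroup_closure] at hh
  refine AddSubgroup.closure_le _ |>.2 ?_ hh
  rintro _ ⟨_, ⟨a, -, _, ⟨f, hf, -, rfl⟩, rfl⟩, b, -, rfl⟩
  exact mul_LH_mul_mem_degreeApprox hf m a b

lemma exists_LH_eq_of_mem_span_LHset {h : FreeAlg R n}
    (hh : h ∈ TwoSidedIdeal.span (LHset d (I : Set (FreeAlg R n)))) (hh0 : h ≠ 0) :
    ∃ g ∈ I, g ≠ 0 ∧ LH d g = LH d h := by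
  obtain ⟨g, hgI, hg_le, hg_eq⟩ := span_LHset_le_degreeApprox (maxdeg d h) hh
  rw [← LH_eq_homogComp] at hg_eq
  have hg_ne : homogComp d (maxdeg d h) g ≠ 0 := hg_eq ▸ LH_ne_zero hh0
  have hdeg : maxdeg d g = maxdeg d h := le_antisymm hg_le (le_maxdeg_of_homogComp_ne_zero hg_ne)
  refine ⟨g, hgI, ?_, by rw [LH_eq_homogComp, hdeg, hg_eq]⟩
  rintro rfl
  exact hg_ne (map_zero _)

lemma setOf_span_LHset_eq {β : Type*} {φ : FreeAlg R n → β}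
    (hφ : ∀ f : FreeAlg R n, f ≠ 0 → φ (LH d f) = φ f) :
    {x | ∃ h ∈ ((TwoSidedIdeal.span (LHset d (I : Set (FreeAlg R n))) :
        TwoSidedIdeal (FreeAlg R n)) : Set (FreeAlg R n)), h ≠ 0 ∧ φ h = x} =
      {x | ∃ f ∈ (I : Set (FreeAlg R n)), f ≠ 0 ∧ φ f = x} := by
  ext x
  constructor
  · rintro ⟨h, hh, hh0, rfl⟩
    obtain ⟨g, hgI, hg0, hLH⟩ := exists_LH_eq_of_mem_span_LHset hh hh0
    exact ⟨g, hgI, hg0, by rw [← hφ g hg0, hLH, hφ h hh0]⟩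
  · rintro ⟨f, hf, hf0, rfl⟩
    exact ⟨LH d f, TwoSidedIdeal.subset_span ⟨f, hf, hf0, rfl⟩, LH_ne_zero hf0, hφ f hf0⟩

end Approximation

section LeadingTerms

variable [LinearOrder (Word n)] {d : Fin n → ℕ}

lemma LMon_mem_support {f : FreeAlg R n} (hf : f ≠ 0) : LMon f ∈ f.coeff.support := by
  rw [LMon, dif_neg hf]
  exact Finset.max'_mem _ _

lemma le_LMon {f : FreeAlg R n} {w : Word n} (hw : w ∈ f.coeff.support) : w ≤ LMon f := by
  have hf : f ≠ 0 := by rintro rfl; simp at hw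
  rw [LMon, dif_neg hf]
  exact Finset.le_max' _ w hw

lemma LMon_eq_of_isGreatest {f : FreeAlg R n} {w : Word n}
    (hw : IsGreatest (f.coeff.support : Set (Word n)) w) : LMon f = w :=
  le_antisymm (hw.2 (LMon_mem_support (by rintro rfl; simpa using hw.1))) (le_LMon hw.1)

lemma wdeg_LMon (hlt : ∀ u v : Word n, wdeg d u < wdeg d v → u < v) {f : FreeAlg R n}
    (hf : f ≠ 0) : wdeg d (LMon f) = maxdeg d f := by
  obtain ⟨w, hw, hdeg⟩ := Finset.exists_mem_eq_sup f.coeff.support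
    (Finsupp.support_nonempty_iff.2 (coeff_eq_zero.not.2 hf)) (wdeg d)
  refine le_antisymm (Finset.le_sup (LMon_mem_support hf)) ?_
  rw [maxdeg, hdeg]
  exact not_lt.1 fun hlt' => (hlt _ _ hlt').not_ge (le_LMon hw)

lemma LMon_LH (hlt : ∀ u v : Word n, wdeg d u < wdeg d v → u < v) {f : FreeAlg R n}
    (hf : f ≠ 0) : LMon (LH d f) = LMon f := by
  refine LMon_eq_of_isGreatest ⟨?_, fun w hw => le_LMon ?_⟩
  · rw [Finset.mem_coe, Finsupp.mem_support_iff, LH_eq_homogComp, homogComp_coeff,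
      if_pos (wdeg_LMon hlt hf)]
    exact Finsupp.mem_support_iff.1 (LMon_mem_support hf)
  · rw [LH_eq_homogComp] at hw
    exact support_homogComp_subset _ _ hw

lemma LTerm_LH (hlt : ∀ u v : Word n, wdeg d u < wdeg d v → u < v) {f : FreeAlg R n}
    (hf : f ≠ 0) : LTerm (LH d f) = LTerm f := by
  rw [LTerm, LTerm, LCoef, LCoef, LMon_LH hlt hf, LH_eq_homogComp, homogComp_coeff,
    if_pos (wdeg_LMon hlt hf)]

end LeadingTerms

theorem lt_lm_of_lh_ideal_general [LinearOrder (Word n)] (d : Fin n → ℕ)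
    (hord : IsGradedMonomialOrder d) (I : TwoSidedIdeal (FreeAlg R n)) :
    LTset ((TwoSidedIdeal.span (LHset d (I : Set (FreeAlg R n))) :
        TwoSidedIdeal (FreeAlg R n)) : Set (FreeAlg R n)) =
      LTset (I : Set (FreeAlg R n)) ∧
    LMset ((TwoSidedIdeal.span (LHset d (I : Set (FreeAlg R n))) :
        TwoSidedIdeal (FreeAlg R n)) : Set (FreeAlg R n)) =
      LMset (I : Set (FreeAlg R n)) := by
  have hlt := hord.2
  refine ⟨?_, setOf_span_LHset_eq fun f hf => LMon_LH hlt hf⟩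
  have hLT := setOf_span_LHset_eq (I := I) fun f hf => LTerm_LH hlt hf
  simp only [LTset, eq_comm (b := LTerm _)]
  exact hLT

/-- Let `J = ⟨LH(I)⟩`, with `≺` an ℕ-graded monomial ordering. Then the
set of leading terms of `J` equals that of `I`, and `LM(J) = LM(I)`. -/
theorem lt_lm_of_lh_ideal [LinearOrder (Word n)] (d : Fin n → ℕ) (hd : ∀ i, 0 < d i)
    (hord : IsGradedMonomialOrder d) (I : TwoSidedIdeal (FreeAlg R n)) :
    LTset ((TwoSidedIdeal.span (LHset d (I : Set (FreeAlg R n))) :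
        TwoSidedIdeal (FreeAlg R n)) : Set (FreeAlg R n)) =
      LTset (I : Set (FreeAlg R n)) ∧
    LMset ((TwoSidedIdeal.span (LHset d (I : Set (FreeAlg R n))) :
        TwoSidedIdeal (FreeAlg R n)) : Set (FreeAlg R n)) =
      LMset (I : Set (FreeAlg R n)) :=
  lt_lm_of_lh_ideal_general d hord I
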